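/- For a thermodynamically stable Gaussian spin glass, the disorder-averaged Gibbs expectation of the Hamiltonian per particle satisfies E[Ω(h)] ≤ (1+β)·c̄ for all β ≥ 0, where h = H/|Λ|. -/

import Mathlib

open MeasureTheory ProbabilityTheory

/-- The spin value of a Boolean variable. -/
noncomputable def spin (b : Bool) : ℝ := if b then 1 else -1

/-- The Gaussian Hamiltonian `H(σ) = -∑_X J_X σ_X`. -/
noncomputable def Ham {Λ : Type*} [Fintype Λ] [DecidableEq Λ]
    (J : Finset Λ → ℝ) (s : Λ → Bool) : ℝ :=
  -∑ X : Finset Λ, J X * ∏ i ∈ X, spin (s i)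

/-- The Gibbs expectation at inverse temperature `β`. -/
noncomputable def gibbsExp {Λ : Type*} [Fintype Λ] [DecidableEq Λ]
    (β : ℝ) (H : (Λ → Bool) → ℝ) (f : (Λ → Bool) → ℝ) : ℝ :=
  (∑ s, f s * Real.exp (-β * H s)) / ∑ s, Real.exp (-β * H s)

/-!
At every realisation of the couplings, the Gibbs state at `β ≥ 0` favours low energies, so its
mean energy is at most the mean energy under the uniform distribution on configurations
(Chebyshev's sum inequality, since `H` and `exp (-β H)` are oppositely ordered). Every spin
monomial `σ_X` with `X ≠ ∅` averages to zero over configurations, so that uniform mean is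
`-J_∅`. Averaging over the disorder gives `E[Ω(h)] ≤ -μ_∅ / |Λ| ≤ c̄ ≤ (1 + β) c̄`.
-/

section Boltzmann

variable {α : Type*}

lemma antivary_exp_neg_mul (f : α → ℝ) {β : ℝ} (hβ : 0 ≤ β) :
    Antivary f (fun a => Real.exp (-β * f a)) := by
  intro a b hlt
  by_contra! hab
  exact hlt.not_ge (Real.exp_le_exp.2 (by nlinarith))

lemma boltzmann_mean_le_mean [Fintype α] [Nonempty α] (f : α → ℝ) {β : ℝ} (hβ : 0 ≤ β) :
    (∑ a, f a * Real.exp (-β * f a)) / ∑ a, Real.exp (-β * f a)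
      ≤ (∑ a, f a) / Fintype.card α := by
  have hZ : 0 < ∑ a, Real.exp (-β * f a) :=
    Finset.sum_pos (fun a _ => Real.exp_pos _) Finset.univ_nonempty
  have hcard : (0 : ℝ) < Fintype.card α := by exact_mod_cast Fintype.card_pos
  rw [div_le_div_iff₀ hZ hcard, mul_comm]
  exact (antivary_exp_neg_mul f hβ).card_mul_sum_le_sum_mul_sum

end Boltzmann

section SpinSums

variable {Λ : Type*} [Fintype Λ] [DecidableEq Λ]

lemma sum_prod_spin_eq_zero {X : Finset Λ} (hX : X.Nonempty) :
    ∑ s : Λ → Bool, ∏ i ∈ X, spin (s i) = 0 := by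
  obtain ⟨i, hi⟩ := hX
  calc ∑ s : Λ → Bool, ∏ j ∈ X, spin (s j)
      = ∑ s : Λ → Bool, ∏ j, (if j ∈ X then spin (s j) else 1) := by
        simp only [Finset.prod_ite_mem, Finset.univ_inter]
    _ = ∏ j, ∑ b, (if j ∈ X then spin b else 1) :=
        (Fintype.prod_sum fun j b => if j ∈ X then spin b else 1).symm
    _ = 0 := Finset.prod_eq_zero (Finset.mem_univ i) (by simp [hi, spin])

lemma sum_Ham (J : Finset Λ → ℝ) :
    ∑ s : Λ → Bool, Ham J s = -(Fintype.card (Λ → Bool) * J ∅) := by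
  simp only [Ham, Finset.sum_neg_distrib, neg_inj]
  rw [Finset.sum_comm, Finset.sum_eq_single ∅]
  · simp [mul_comm]
  · intro X _ hX
    rw [← Finset.mul_sum, sum_prod_spin_eq_zero (Finset.nonempty_iff_ne_empty.2 hX), mul_zero]
  · simp

lemma gibbsExp_Ham_div_card_le [Nonempty Λ] (J : Finset Λ → ℝ) {β : ℝ} (hβ : 0 ≤ β) :
    gibbsExp β (Ham J) (fun s => Ham J s / Fintype.card Λ) ≤ -J ∅ / Fintype.card Λ := by
  have hcard : (0 : ℝ) < Fintype.card (Λ → Bool) := by exact_mod_cast Fintype.card_pos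
  have hmean := boltzmann_mean_le_mean (Ham J) hβ
  rw [sum_Ham, neg_div, mul_div_cancel_left₀ _ hcard.ne'] at hmean
  have hrescale : gibbsExp β (Ham J) (fun s => Ham J s / Fintype.card Λ)
      = (∑ s, Ham J s * Real.exp (-β * Ham J s)) / (∑ s, Real.exp (-β * Ham J s))
          / Fintype.card Λ := by
    simp only [gibbsExp, div_mul_eq_mul_div, ← Finset.sum_div, div_right_comm]
  rw [hrescale]
  exact div_le_div_of_nonneg_right hmean (Nat.cast_nonneg _)

end SpinSums

theorem quenched_energy_bound_general
    {Λ : Type*} [Fintype Λ] [DecidableEq Λ] [Nonempty Λ]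
    {Ω : Type*} [MeasureSpace Ω]
    (J : Finset Λ → Ω → ℝ) (μA : Finset Λ → ℝ) (Δsq : Finset Λ → NNReal)
    (hdist : ∀ X, (ℙ : Measure Ω).map (J X) = gaussianReal (μA X) (Δsq X))
    (cbar : ℝ)
    (hμstab : ∑ X : Finset Λ, |μA X| ≤ cbar * (Fintype.card Λ))
    (β : ℝ) (hβ : 0 ≤ β) :
    (∫ ω, gibbsExp β (Ham (fun X => J X ω))
        (fun s => Ham (fun X => J X ω) s / (Fintype.card Λ)))
      ≤ (1 + β) * cbar := by
  have hcard : (0 : ℝ) < Fintype.card Λ := by exact_mod_cast Fintype.card_pos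
  have hμ₀ : |μA ∅| ≤ cbar * Fintype.card Λ :=
    (Finset.single_le_sum (fun X _ => abs_nonneg (μA X)) (Finset.mem_univ ∅)).trans hμstab
  have hcbar : 0 ≤ cbar := nonneg_of_mul_nonneg_left ((abs_nonneg _).trans hμ₀) hcard
  have hlaw : HasLaw (J ∅) (gaussianReal (μA ∅) (Δsq ∅)) ℙ :=
    ⟨aemeasurable_of_map_neZero (by rw [hdist ∅]; infer_instance), hdist ∅⟩
  by_cases hint : Integrable (fun ω => gibbsExp β (Ham (fun X => J X ω))
      (fun s => Ham (fun X => J X ω) s / (Fintype.card Λ))) ℙ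
  swap
  · rw [integral_undef hint]
    positivity
  calc _ ≤ ∫ ω, -J ∅ ω / Fintype.card Λ :=
        integral_mono hint (hlaw.hasGaussianLaw.integrable.neg.div_const _)
          fun ω => gibbsExp_Ham_div_card_le (fun X => J X ω) hβ
    _ = -μA ∅ / Fintype.card Λ := by
        rw [integral_div, integral_neg, hlaw.integral_eq, integral_id_gaussianReal]
    _ ≤ cbar := (div_le_iff₀ hcard).2 ((neg_le_abs _).trans hμ₀)
    _ ≤ (1 + β) * cbar := le_mul_of_one_le_left hcbar (by linarith)

/-- For a thermodynamically stable Gaussian spin glass, the disorder-averaged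
Gibbs expectation of the Hamiltonian per particle satisfies
`E[Ω(h)] ≤ (1+β)·c̄` for all `β ≥ 0`. -/
theorem quenched_energy_bound
    {Λ : Type*} [Fintype Λ] [DecidableEq Λ] [Nonempty Λ]
    {Ω : Type*} [MeasureSpace Ω] [IsProbabilityMeasure (ℙ : Measure Ω)]
    (J : Finset Λ → Ω → ℝ) (μA : Finset Λ → ℝ) (Δsq : Finset Λ → NNReal)
    (hindep : iIndepFun J ℙ)
    (hdist : ∀ X, (ℙ : Measure Ω).map (J X) = gaussianReal (μA X) (Δsq X))
    (cbar : ℝ)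
    (hμstab : ∑ X : Finset Λ, |μA X| ≤ cbar * (Fintype.card Λ))
    (hΔstab : ∑ X : Finset Λ, (Δsq X : ℝ) ≤ cbar * (Fintype.card Λ))
    (β : ℝ) (hβ : 0 ≤ β) :
    (∫ ω, gibbsExp β (Ham (fun X => J X ω))
        (fun s => Ham (fun X => J X ω) s / (Fintype.card Λ)))
      ≤ (1 + β) * cbar :=
  quenched_energy_bound_general J μA Δsq hdist cbar hμstab β hβ
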